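/- arXiv:1612.08580 — 5 statements merged into one kernel-verified Lean document; each statement's English description precedes it below -/
import Mathlib

section
/- A family H of finite sets is ordered-by-containment (i.e., totally ordered by strict set inclusion) if and only if its UI dimension is at most 1. -/
open Classical in
/-- For a set-family `H` of finite sets and a set `s`, `interFam H s = {h ∩ s : h ∈ H}`. -/
noncomputable def interFam {α : Type*} (H : Set (Finset α)) (s : Set α) : Set (Finset α) :=
  (fun h => h.filter (fun x => x ∈ s)) '' H

/-- A set-family is `d`-bounded if for every `j ≥ 1` it contains at most
`(j+1)^(d-1)` sets of cardinality `j`. -/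
def DBounded {α : Type*} (d : ℕ) (G : Set (Finset α)) : Prop :=
  ∀ j : ℕ, 1 ≤ j → {g ∈ G | g.card = j}.encard ≤ ((j + 1) ^ (d - 1) : ℕ)

/-- `UIDimLE H d` means the UI dimension of `H` is at most `d`: for every set `s`,
the family `{h ∩ s : h ∈ H}` is `d`-bounded. -/
def UIDimLE {α : Type*} (H : Set (Finset α)) (d : ℕ) : Prop :=
  ∀ s : Set α, DBounded d (interFam H s)

/-- A family of finite sets is ordered-by-containment iff its UI dimension is at most 1. -/
theorem stmt_3 {α : Type*} (H : Set (Finset α)) :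
    (∀ h₁ ∈ H, ∀ h₂ ∈ H, h₁ ≠ h₂ → h₁ ⊂ h₂ ∨ h₂ ⊂ h₁) ↔ UIDimLE H 1 := by
  classical
  constructor
  · intro hchain s j hj
    norm_num
    rw [Set.encard_le_one_iff]
    rintro g₁ g₂ ⟨⟨h₁, hh₁, rfl⟩, hc₁⟩ ⟨⟨h₂, hh₂, rfl⟩, hc₂⟩
    by_cases heq : h₁ = h₂
    · rw [heq]
    · rcases hchain h₁ hh₁ h₂ hh₂ heq with hsub | hsub
      · exact Finset.eq_of_subset_of_card_le
          (Finset.filter_subset_filter _ hsub.subset) (le_of_eq (hc₂.trans hc₁.symm))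
      · exact (Finset.eq_of_subset_of_card_le
          (Finset.filter_subset_filter _ hsub.subset) (le_of_eq (hc₁.trans hc₂.symm))).symm
  · intro hui h₁ hh₁ h₂ hh₂ hne
    by_contra hcon
    push_neg at hcon
    obtain ⟨h12, h21⟩ := hcon
    have hns₁ : ¬ h₁ ⊆ h₂ := fun hs => h12 ⟨hs, fun hs' => hne (Finset.Subset.antisymm hs hs')⟩
    have hns₂ : ¬ h₂ ⊆ h₁ := fun hs => h21 ⟨hs, fun hs' => hne (Finset.Subset.antisymm hs' hs)⟩
    obtain ⟨a, ha₁, ha₂⟩ := Finset.not_subset.mp hns₁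
    obtain ⟨b, hb₂, hb₁⟩ := Finset.not_subset.mp hns₂
    have hkey := hui ({a, b} : Set α) 1 le_rfl
    norm_num [Set.encard_le_one_iff] at hkey
    have habne : a ≠ b := fun h => ha₂ (h ▸ hb₂)
    have e₁ : h₁.filter (fun x => x ∈ ({a, b} : Set α)) = {a} := by
      ext x
      simp only [Finset.mem_filter, Set.mem_insert_iff, Set.mem_singleton_iff,
        Finset.mem_singleton]
      constructor
      · rintro ⟨hx, rfl | rfl⟩
        · rfl
        · exact absurd hx hb₁
      · rintro rfl; exact ⟨ha₁, Or.inl rfl⟩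
    have e₂ : h₂.filter (fun x => x ∈ ({a, b} : Set α)) = {b} := by
      ext x
      simp only [Finset.mem_filter, Set.mem_insert_iff, Set.mem_singleton_iff,
        Finset.mem_singleton]
      constructor
      · rintro ⟨hx, rfl | rfl⟩
        · exact absurd hx ha₂
        · rfl
      · rintro rfl; exact ⟨hb₂, Or.inr rfl⟩
    have m₁ : ({a} : Finset α) ∈ interFam H ({a, b} : Set α) := ⟨h₁, hh₁, by simpa using e₁⟩
    have m₂ : ({b} : Finset α) ∈ interFam H ({a, b} : Set α) := ⟨h₂, hh₂, by simpa using e₂⟩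
    have := hkey ({a} : Finset α) ({b} : Finset α) m₁ (Finset.card_singleton a)
      m₂ (Finset.card_singleton b)
    exact habne (Finset.singleton_inj.mp this)
end

section
/- If a family H of finite sets is not totally ordered by containment, then there exists a two-element set h' such that the family H ∩ h' contains at least two distinct sets of cardinality 1; in particular H ∩ h' is not 1-bounded and UIDim(H) > 1. -/
/-- If `H` is not totally ordered by containment, then some two-element set `h'`
yields two distinct cardinality-1 sets in `{h ∩ h' : h ∈ H}`; in particular
that family is not 1-bounded and `UIDim(H) > 1`. -/
theorem stmt_5 {α : Type*} (H : Set (Finset α))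
    (hnot : ¬ (∀ h₁ ∈ H, ∀ h₂ ∈ H, h₁ ≠ h₂ → h₁ ⊂ h₂ ∨ h₂ ⊂ h₁)) :
    ∃ h' : Set α, h'.encard = 2 ∧
      (∃ g₁ ∈ interFam H h', ∃ g₂ ∈ interFam H h',
        g₁ ≠ g₂ ∧ g₁.card = 1 ∧ g₂.card = 1) ∧
      ¬ DBounded 1 (interFam H h') ∧ ¬ UIDimLE H 1 := by
  push_neg at hnot
  obtain ⟨h₁, hh₁, h₂, hh₂, hne, hnsub⟩ := hnot

  obtain ⟨hn12, hn21⟩ := hnsub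
  have hs12 : ¬ h₁ ⊆ h₂ := fun hs => hn12 ⟨hs, fun hs' => hne (le_antisymm hs hs')⟩
  have hs21 : ¬ h₂ ⊆ h₁ := fun hs => hn21 ⟨hs, fun hs' => hne.symm (le_antisymm hs hs')⟩
  obtain ⟨a, ha1, ha2⟩ := Finset.not_subset.mp hs12
  obtain ⟨b, hb2, hb1⟩ := Finset.not_subset.mp hs21
  have hab : a ≠ b := fun h => hb1 (h ▸ ha1)
  classical
  refine ⟨({a, b} : Set α), ?_, ?_⟩
  · rw [Set.encard_pair hab]
  have hg1 : h₁.filter (fun x => x ∈ ({a, b} : Set α)) = {a} := by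
    ext x
    simp only [Finset.mem_filter, Set.mem_insert_iff, Set.mem_singleton_iff,
      Finset.mem_singleton]
    constructor
    · rintro ⟨hx, rfl | rfl⟩
      · rfl
      · exact absurd hx hb1
    · rintro rfl; exact ⟨ha1, Or.inl rfl⟩
  have hg2 : h₂.filter (fun x => x ∈ ({a, b} : Set α)) = {b} := by
    ext x
    simp only [Finset.mem_filter, Set.mem_insert_iff, Set.mem_singleton_iff,
      Finset.mem_singleton]
    constructor
    · rintro ⟨hx, rfl | rfl⟩
      · exact absurd hx ha2
      · rfl
    · rintro rfl; exact ⟨hb2, Or.inr rfl⟩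
  have m1 : ({a} : Finset α) ∈ interFam H ({a, b} : Set α) := ⟨h₁, hh₁, by simpa using hg1⟩
  have m2 : ({b} : Finset α) ∈ interFam H ({a, b} : Set α) := ⟨h₂, hh₂, by simpa using hg2⟩
  have gne : ({a} : Finset α) ≠ {b} := by
    simp [Finset.singleton_injective.ne_iff, hab]
  have key : ∃ g₁ ∈ interFam H ({a, b} : Set α), ∃ g₂ ∈ interFam H ({a, b} : Set α),
      g₁ ≠ g₂ ∧ g₁.card = 1 ∧ g₂.card = 1 :=
    ⟨{a}, m1, {b}, m2, gne, Finset.card_singleton a, Finset.card_singleton b⟩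
  have hnd : ¬ DBounded 1 (interFam H ({a, b} : Set α)) := by
    intro hd
    have := hd 1 le_rfl
    norm_num at this
    have h1 : ({a} : Finset α) ∈ {g ∈ interFam H ({a, b} : Set α) | g.card = 1} :=
      ⟨m1, Finset.card_singleton a⟩
    have h2 : ({b} : Finset α) ∈ {g ∈ interFam H ({a, b} : Set α) | g.card = 1} :=
      ⟨m2, Finset.card_singleton b⟩
    exact gne ((Set.encard_le_one_iff.mp this) _ _ h1 h2)
  exact ⟨key, hnd, fun hu => hnd (hu _)⟩
end

section
/- There exist two families H₁, H₂ of finite subsets of ℝ², each with UI dimension at most 1, such that the family of pairwise intersections {h₁ ∩ h₂ : h₁ ∈ H₁, h₂ ∈ H₂} is not d-bounded for any integer d ≥ 1. -/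
/-- Any chain (w.r.t. inclusion) of finite sets has UI dimension at most 1. -/
lemma chain_uidim {α : Type*} {H : Set (Finset α)}
    (hH : ∀ g ∈ H, ∀ g' ∈ H, g ⊆ g' ∨ g' ⊆ g) : UIDimLE H 1 := by
  classical
  intro s j hj
  have h1 : (((j + 1) ^ (1 - 1) : ℕ) : ℕ∞) = 1 := by norm_num
  rw [h1, Set.encard_le_one_iff]
  rintro a b ⟨⟨h, hh, rfl⟩, ha⟩ ⟨⟨h', hh', rfl⟩, hb⟩
  have hcard := ha.trans hb.symm
  dsimp only at hcard ⊢
  rcases hH h hh h' hh' with hsub | hsub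
  · exact Finset.eq_of_subset_of_card_le (Finset.filter_subset_filter _ hsub) hcard.ge
  · exact (Finset.eq_of_subset_of_card_le (Finset.filter_subset_filter _ hsub) hcard.le).symm

/-- `myS k` : total size of the first `k` blocks. -/
def myS : ℕ → ℕ
  | 0 => 0
  | k + 1 => myS k + ((myS k + 2) ^ k + 1)

/-- `myL k` : the length of block `k`. -/
def myL (k : ℕ) : ℕ := (myS k + 2) ^ k + 1

lemma myS_succ (k : ℕ) : myS (k + 1) = myS k + myL k := rfl

/-- the embedding `ℕ × ℕ ↪ ℝ × ℝ`. -/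
noncomputable def ee : ℕ × ℕ ↪ ℝ × ℝ :=
  ⟨fun p => ((p.1 : ℝ), (p.2 : ℝ)), by
    intro a b h
    simp only [Prod.ext_iff, Nat.cast_inj] at h ⊢
    exact h⟩

/-- the union of the first `k` blocks. -/
def prevB (k : ℕ) : Finset (ℕ × ℕ) :=
  (Finset.range k).biUnion fun k' => {k'} ×ˢ Finset.range (myL k')

lemma mem_prevB {p : ℕ × ℕ} {k : ℕ} : p ∈ prevB k ↔ p.1 < k ∧ p.2 < myL p.1 := by
  obtain ⟨a, b⟩ := p
  simp only [prevB, Finset.mem_biUnion, Finset.mem_range, Finset.mem_product,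
    Finset.mem_singleton]
  constructor
  · rintro ⟨k', hk', rfl, hb⟩; exact ⟨hk', hb⟩
  · rintro ⟨ha, hb⟩; exact ⟨a, ha, rfl, hb⟩

def Afam (k i : ℕ) : Finset (ℕ × ℕ) := prevB k ∪ {k} ×ˢ Finset.range (i + 1)

def Bfam (k i : ℕ) : Finset (ℕ × ℕ) := prevB k ∪ {k} ×ˢ Finset.Ico i (myL k)

lemma mem_Afam {p : ℕ × ℕ} {k i : ℕ} :
    p ∈ Afam k i ↔ (p.1 < k ∧ p.2 < myL p.1) ∨ (p.1 = k ∧ p.2 < i + 1) := by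
  obtain ⟨a, b⟩ := p
  simp only [Afam, Finset.mem_union, mem_prevB, Finset.mem_product, Finset.mem_singleton,
    Finset.mem_range]

lemma mem_Bfam {p : ℕ × ℕ} {k i : ℕ} :
    p ∈ Bfam k i ↔ (p.1 < k ∧ p.2 < myL p.1) ∨ (p.1 = k ∧ i ≤ p.2 ∧ p.2 < myL k) := by
  obtain ⟨a, b⟩ := p
  simp only [Bfam, Finset.mem_union, mem_prevB, Finset.mem_product, Finset.mem_singleton,
    Finset.mem_Ico]

lemma Afam_chain {k i k' i' : ℕ} (hi : i < myL k) (hi' : i' < myL k') :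
    Afam k i ⊆ Afam k' i' ∨ Afam k' i' ⊆ Afam k i := by
  rcases lt_trichotomy k k' with h | rfl | h
  · left
    intro p hp
    rw [mem_Afam] at hp ⊢
    rcases hp with ⟨h1, h2⟩ | ⟨h1, h2⟩
    · exact Or.inl ⟨h1.trans h, h2⟩
    · subst h1; exact Or.inl ⟨h, by omega⟩
  · rcases le_total i i' with h | h
    · left; intro p hp; rw [mem_Afam] at hp ⊢; omega
    · right; intro p hp; rw [mem_Afam] at hp ⊢; omega
  · right
    intro p hp
    rw [mem_Afam] at hp ⊢
    rcases hp with ⟨h1, h2⟩ | ⟨h1, h2⟩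
    · exact Or.inl ⟨h1.trans h, h2⟩
    · subst h1; exact Or.inl ⟨h, by omega⟩

lemma Bfam_chain {k i k' i' : ℕ} (hi : i < myL k) (hi' : i' < myL k') :
    Bfam k i ⊆ Bfam k' i' ∨ Bfam k' i' ⊆ Bfam k i := by
  rcases lt_trichotomy k k' with h | rfl | h
  · left
    intro p hp
    rw [mem_Bfam] at hp ⊢
    rcases hp with ⟨h1, h2⟩ | ⟨h1, h2, h3⟩
    · exact Or.inl ⟨h1.trans h, h2⟩
    · subst h1; exact Or.inl ⟨h, h3⟩
  · rcases le_total i i' with h | h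
    · right; intro p hp; rw [mem_Bfam] at hp ⊢; omega
    · left; intro p hp; rw [mem_Bfam] at hp ⊢; omega
  · right
    intro p hp
    rw [mem_Bfam] at hp ⊢
    rcases hp with ⟨h1, h2⟩ | ⟨h1, h2, h3⟩
    · exact Or.inl ⟨h1.trans h, h2⟩
    · subst h1; exact Or.inl ⟨h, h3⟩

lemma inter_eq {k i : ℕ} (hi : i < myL k) :
    Afam k i ∩ Bfam k i = insert (k, i) (prevB k) := by
  ext p
  rw [Finset.mem_inter, mem_Afam, mem_Bfam, Finset.mem_insert, mem_prevB]
  obtain ⟨a, b⟩ := p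
  simp only [Prod.mk.injEq]
  rcases eq_or_ne a k with rfl | hne
  · constructor
    · rintro ⟨h1 | h1, h2 | h2⟩ <;> omega
    · rintro (⟨h1, h2⟩ | h) <;> omega
  · constructor
    · rintro ⟨h1 | h1, _⟩
      · exact Or.inr h1
      · omega
    · rintro (⟨h1, h2⟩ | h)
      · omega
      · exact ⟨Or.inl h, Or.inl h⟩

lemma card_prevB (k : ℕ) : (prevB k).card = myS k := by
  induction k with
  | zero => rfl
  | succ k ih =>
    have : prevB (k + 1) = prevB k ∪ {k} ×ˢ Finset.range (myL k) := by
      rw [prevB, Finset.range_add_one, Finset.biUnion_insert, Finset.union_comm]; rfl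
    rw [this, Finset.card_union_of_disjoint, ih, Finset.card_product, myS_succ]
    · simp
    · rw [Finset.disjoint_left]
      rintro ⟨a, b⟩ hp hq
      rw [mem_prevB] at hp
      simp only [Finset.mem_product, Finset.mem_singleton] at hq
      omega

lemma notmem_prevB {k i : ℕ} : (k, i) ∉ prevB k := by
  rw [mem_prevB]; simp

/-- Intersections of two UI-dimension-1 families of finite subsets of ℝ² can fail
to be `d`-bounded for every `d ≥ 1`. -/
theorem stmt_10 :
    ∃ H₁ H₂ : Set (Finset (ℝ × ℝ)), UIDimLE H₁ 1 ∧ UIDimLE H₂ 1 ∧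
      ∀ d : ℕ, 1 ≤ d → ¬ DBounded d (Set.image2 (· ∩ ·) H₁ H₂) := by
  refine ⟨{f | ∃ k i, i < myL k ∧ f = (Afam k i).map ee},
          {f | ∃ k i, i < myL k ∧ f = (Bfam k i).map ee}, ?_, ?_, ?_⟩
  · apply chain_uidim
    rintro g ⟨k, i, hi, rfl⟩ g' ⟨k', i', hi', rfl⟩
    rcases Afam_chain hi hi' with h | h
    · exact Or.inl (Finset.map_subset_map.mpr h)
    · exact Or.inr (Finset.map_subset_map.mpr h)
  · apply chain_uidim
    rintro g ⟨k, i, hi, rfl⟩ g' ⟨k', i', hi', rfl⟩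
    rcases Bfam_chain hi hi' with h | h
    · exact Or.inl (Finset.map_subset_map.mpr h)
    · exact Or.inr (Finset.map_subset_map.mpr h)
  · intro d hd hDB
    set k := d - 1 with hk
    have hdk : d - 1 = k := rfl
    specialize hDB (myS k + 1) (by omega)
    -- the finset of witnesses
    set F : Finset (Finset (ℝ × ℝ)) :=
      (Finset.range (myL k)).image (fun i => (insert (k, i) (prevB k)).map ee) with hF
    have hFcard : F.card = myL k := by
      rw [hF, Finset.card_image_of_injOn, Finset.card_range]
      intro i hi i' hi' heq
      dsimp only at heq
      have : ee (k, i) ∈ (insert (k, i') (prevB k)).map ee := by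
        rw [← heq, Finset.mem_map']; exact Finset.mem_insert_self _ _
      rw [Finset.mem_map'] at this
      rcases Finset.mem_insert.mp this with h | h
      · exact (Prod.mk.injEq _ _ _ _ ▸ h).2
      · exact absurd h notmem_prevB
    have hFsub : (↑F : Set (Finset (ℝ × ℝ))) ⊆
        {g ∈ Set.image2 (· ∩ ·) {f | ∃ k i, i < myL k ∧ f = (Afam k i).map ee}
            {f | ∃ k i, i < myL k ∧ f = (Bfam k i).map ee} | g.card = myS k + 1} := by
      intro g hg
      rw [Finset.coe_image] at hg
      obtain ⟨i, hi, rfl⟩ := hg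
      rw [Finset.coe_range, Set.mem_Iio] at hi
      dsimp only
      constructor
      · have : (insert (k, i) (prevB k)).map ee
            = ((Afam k i).map ee) ∩ ((Bfam k i).map ee) := by
          rw [← Finset.map_inter, inter_eq hi]
        rw [this]
        exact Set.mem_image2_of_mem ⟨k, i, hi, rfl⟩ ⟨k, i, hi, rfl⟩
      · rw [Finset.card_map, Finset.card_insert_of_notMem notmem_prevB, card_prevB]
    have hle : (myL k : ℕ∞) ≤ ((myS k + 1 + 1) ^ (d - 1) : ℕ) := by
      calc (myL k : ℕ∞) = (F.card : ℕ∞) := by rw [hFcard]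
        _ = (↑F : Set (Finset (ℝ × ℝ))).encard := (Set.encard_coe_eq_coe_finsetCard F).symm
        _ ≤ _ := Set.encard_mono hFsub
        _ ≤ _ := hDB
    rw [Nat.cast_le] at hle
    have h22 : myS k + 1 + 1 = myS k + 2 := by omega
    rw [h22, myL, hdk] at hle
    omega
end

section
/- If a set-family H has finite UI dimension d, then for every finite set h', the number of distinct intersections |{h ∩ h' : h ∈ H}| is at most Σ_{j=0}^{|h'|} (j+1)^(d-1); consequently, the VC dimension of H is finite. -/
lemma slices_bound {α : Type*} (d : ℕ) (G : Set (Finset α))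
    (hb : DBounded d G) :
    ∀ n : ℕ, {g ∈ G | g.card ≤ n}.encard ≤
      ((∑ j ∈ Finset.range (n + 1), (j + 1) ^ (d - 1) : ℕ)) := by
  intro n
  induction n with
  | zero =>
    have hsub : {g ∈ G | g.card ≤ 0} ⊆ {(∅ : Finset α)} := by
      intro g hg
      simp only [Set.mem_setOf_eq, Nat.le_zero, Finset.card_eq_zero] at hg
      simp [hg.2]
    calc {g ∈ G | g.card ≤ 0}.encard ≤ ({(∅ : Finset α)} : Set (Finset α)).encard :=
          Set.encard_mono hsub
      _ = 1 := Set.encard_singleton _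
      _ ≤ _ := by simp
  | succ n ih =>
    have hsplit : {g ∈ G | g.card ≤ n + 1} ⊆
        {g ∈ G | g.card ≤ n} ∪ {g ∈ G | g.card = n + 1} := by
      intro g hg
      rcases Nat.lt_or_ge g.card (n + 1) with h | h
      · exact Or.inl ⟨hg.1, Nat.lt_succ_iff.mp h⟩
      · exact Or.inr ⟨hg.1, le_antisymm hg.2 h⟩
    calc {g ∈ G | g.card ≤ n + 1}.encard
        ≤ ({g ∈ G | g.card ≤ n} ∪ {g ∈ G | g.card = n + 1}).encard :=
          Set.encard_mono hsplit
      _ ≤ {g ∈ G | g.card ≤ n}.encard + {g ∈ G | g.card = n + 1}.encard :=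
          Set.encard_union_le _ _
      _ ≤ ((∑ j ∈ Finset.range (n + 1), (j + 1) ^ (d - 1) : ℕ))
            + (((n + 1) + 1) ^ (d - 1) : ℕ) :=
          add_le_add ih (hb (n + 1) (Nat.succ_le_succ (Nat.zero_le n)))
      _ = ((∑ j ∈ Finset.range (n + 2), (j + 1) ^ (d - 1) : ℕ)) := by
          rw [← Nat.cast_add]
          congr 1
          simp [Finset.sum_range_succ]

/-- Eventually the sum is beaten by `2^n`. -/
lemma exists_exp_beats_sum (d : ℕ) (hd : 1 ≤ d) :
    ∃ N : ℕ, ∀ n ≥ N, (∑ j ∈ Finset.range (n + 1), (j + 1) ^ (d - 1)) < 2 ^ n := by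
  have h2 : (1 : ℝ) < 2 := one_lt_two
  have hlo := (isLittleO_pow_const_const_pow_of_one_lt (R := ℝ) d h2).comp_tendsto
      (Filter.tendsto_add_atTop_nat 1)
  have hb := hlo.bound (c := 1 / 4) (by norm_num)
  rw [Filter.eventually_atTop] at hb
  obtain ⟨N, hN⟩ := hb
  refine ⟨N, fun n hn => ?_⟩
  have key : ((n + 1 : ℕ) : ℝ) ^ d < 2 ^ n := by
    have h := hN n hn
    simp only [Function.comp] at h
    rw [Real.norm_eq_abs, Real.norm_eq_abs, abs_of_nonneg (by positivity),
      abs_of_nonneg (by positivity)] at h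
    have : (1 / 4 : ℝ) * 2 ^ (n + 1) < 2 ^ n := by
      rw [pow_succ]
      nlinarith [pow_pos (by norm_num : (0:ℝ) < 2) n]
    calc ((n + 1 : ℕ) : ℝ) ^ d ≤ 1 / 4 * 2 ^ (n + 1) := h
      _ < 2 ^ n := this
  have hnat : (n + 1) ^ d < 2 ^ n := by
    have := key
    push_cast at this
    exact_mod_cast this
  calc (∑ j ∈ Finset.range (n + 1), (j + 1) ^ (d - 1))
      ≤ ∑ _j ∈ Finset.range (n + 1), (n + 1) ^ (d - 1) := by
        apply Finset.sum_le_sum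
        intro j hj
        have hj' := Finset.mem_range.mp hj
        exact Nat.pow_le_pow_left (by omega) _
    _ = (n + 1) * (n + 1) ^ (d - 1) := by
        rw [Finset.sum_const, Finset.card_range, smul_eq_mul]
    _ ≤ (n + 1) ^ d := by
        rw [← pow_succ']
        exact Nat.pow_le_pow_right (by omega) (by omega)
    _ < 2 ^ n := hnat

/-- If `H` has UI dimension at most `d`, then for every finite set `h'` the number of
distinct intersections `{h ∩ h' : h ∈ H}` is at most `∑_{j=0}^{|h'|} (j+1)^(d-1)`;
consequently the VC dimension of `H` is finite: there is a `D` bounding the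
cardinality of every set shattered by `H`. -/
theorem stmt_11 {α : Type*} (H : Set (Finset α)) (d : ℕ) (hd : 1 ≤ d)
    (hH : UIDimLE H d) :
    (∀ h' : Finset α,
      (interFam H (h' : Set α)).encard ≤
        ((∑ j ∈ Finset.range (h'.card + 1), (j + 1) ^ (d - 1) : ℕ))) ∧
    ∃ D : ℕ, ∀ s : Finset α,
      (∀ t ⊆ s, ∃ g ∈ interFam H (s : Set α), g = t) → s.card ≤ D := by
  have main : ∀ h' : Finset α,
      (interFam H (h' : Set α)).encard ≤
        ((∑ j ∈ Finset.range (h'.card + 1), (j + 1) ^ (d - 1) : ℕ)) := by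
    intro h'
    have hsub : interFam H (h' : Set α) ⊆
        {g ∈ interFam H (h' : Set α) | g.card ≤ h'.card} := by
      intro g hg
      refine ⟨hg, ?_⟩
      obtain ⟨h, _, rfl⟩ := hg
      apply Finset.card_le_card
      intro x hx
      simp only [Finset.mem_filter, Finset.mem_coe] at hx
      exact hx.2
    exact (Set.encard_mono hsub).trans (slices_bound d _ (hH _) h'.card)
  refine ⟨main, ?_⟩
  obtain ⟨N, hN⟩ := exists_exp_beats_sum d hd
  refine ⟨N, fun s hs => ?_⟩
  by_contra hcard
  push_neg at hcard
  have hpow : ((s.powerset : Set (Finset α))) ⊆ interFam H (s : Set α) := by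
    intro t ht
    simp only [Finset.coe_powerset, Set.mem_preimage, Set.mem_powerset_iff,
      Finset.coe_subset, Finset.mem_coe, Finset.mem_powerset] at ht
    obtain ⟨g, hg, rfl⟩ := hs t ht
    exact hg
  have h1 : ((2 ^ s.card : ℕ) : ℕ∞) ≤ (interFam H (s : Set α)).encard := by
    have := Set.encard_mono hpow
    rwa [Set.encard_coe_eq_coe_finsetCard, Finset.card_powerset] at this
  have h2 := h1.trans (main s)
  rw [Nat.cast_le] at h2
  exact absurd h2 (Nat.not_le.mpr (hN s.card (le_of_lt hcard)))
end

section
/- Let H₁ be a family of finite sets with UIDim(H₁) ≤ d₁ and let h₀ be a fixed finite set of cardinality k. Then the family {h₀ ∪ h₁ : h₁ ∈ H₁} has UI dimension at most d₁, i.e., a fixed (deterministic) set acts as a zero-dimensional family in the Union Rule. -/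
/-- Taking unions with a fixed finite set `h₀` does not increase the UI dimension:
a deterministic set acts as a zero-dimensional family in the Union Rule. -/
theorem stmt_17 {α : Type*} [DecidableEq α] (H₁ : Set (Finset α)) (d₁ : ℕ)
    (h₁ : UIDimLE H₁ d₁) (h₀ : Finset α) (k : ℕ) (hk : h₀.card = k) :
    UIDimLE ((fun h => h₀ ∪ h) '' H₁) d₁ := by
  classical
  intro s j hj
  set b : Finset α := h₀.filter (fun x => x ∈ s) with hb
  set m : ℕ := b.card with hm
  clear_value m b
  -- every element of the new family (intersected with s) contains b
  have hsub : ∀ g' ∈ {g ∈ interFam ((fun h => h₀ ∪ h) '' H₁) s | g.card = j}, b ⊆ g' := by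
    rintro g' ⟨⟨h, ⟨h', _, rfl⟩, rfl⟩, _⟩
    intro x hx
    simp only [hb, Finset.mem_filter, Finset.mem_union] at hx ⊢
    exact ⟨Or.inl hx.1, hx.2⟩
  by_cases hjm : m < j
  · -- inject into the family for H₁ intersected with s \ h₀
    have key := h₁ (s \ ↑h₀) (j - m) (by omega)
    have himg : {g ∈ interFam ((fun h => h₀ ∪ h) '' H₁) s | g.card = j} ⊆
        (fun g => b ∪ g) '' {g ∈ interFam H₁ (s \ ↑h₀) | g.card = j - m} := by
      rintro g' hg'
      obtain ⟨⟨h, ⟨h', hh', rfl⟩, rfl⟩, hcard⟩ := hg'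
      refine ⟨_, ⟨⟨h', hh', rfl⟩, ?_⟩, ?_⟩
      · -- cardinality
        have hdisj : Disjoint b (h'.filter (fun x => x ∈ s \ (↑h₀ : Set α))) := by
          simp only [Finset.disjoint_left, hb, Finset.mem_filter, Set.mem_diff,
            Finset.mem_coe]
          rintro a ⟨ha0, _⟩ ⟨_, _, ha0'⟩
          exact ha0' ha0
        have hun : b ∪ h'.filter (fun x => x ∈ s \ (↑h₀ : Set α)) =
            (h₀ ∪ h').filter (fun x => x ∈ s) := by
          ext x
          simp only [hb, Finset.mem_union, Finset.mem_filter, Set.mem_diff, Finset.mem_coe]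
          constructor
          · rintro (⟨hx0, hxs⟩ | ⟨hx', hxs, _⟩) <;> simp_all
          · rintro ⟨hx01, hxs⟩
            by_cases hx0 : x ∈ h₀
            · exact Or.inl ⟨hx0, hxs⟩
            · exact Or.inr ⟨hx01.resolve_left hx0, hxs, hx0⟩
        have := Finset.card_union_of_disjoint hdisj
        rw [hun] at this
        simp only at hcard
        beta_reduce
        rw [Finset.filter_congr_decidable]
        omega
      · -- the union recovers g'
        ext x
        simp only [Finset.mem_union, hb, Finset.mem_filter, Set.mem_diff, Finset.mem_coe]
        constructor
        · rintro (⟨hx0, hxs⟩ | ⟨hx', hxs, _⟩) <;> simp_all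
        · rintro ⟨hx01, hxs⟩
          by_cases hx0 : x ∈ h₀
          · exact Or.inl ⟨hx0, hxs⟩
          · exact Or.inr ⟨hx01.resolve_left hx0, hxs, hx0⟩
    calc {g ∈ interFam ((fun h => h₀ ∪ h) '' H₁) s | g.card = j}.encard
        ≤ ((fun g => b ∪ g) '' {g ∈ interFam H₁ (s \ ↑h₀) | g.card = j - m}).encard :=
          Set.encard_le_encard himg
      _ ≤ {g ∈ interFam H₁ (s \ ↑h₀) | g.card = j - m}.encard := Set.encard_image_le _ _
      _ ≤ ((j - m + 1) ^ (d₁ - 1) : ℕ) := key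
      _ ≤ ((j + 1) ^ (d₁ - 1) : ℕ) := by
          exact_mod_cast Nat.pow_le_pow_left (by omega) _
  · -- j ≤ m : at most one set (namely b itself)
    have hsingle : {g ∈ interFam ((fun h => h₀ ∪ h) '' H₁) s | g.card = j} ⊆ {b} := by
      intro g' hg'
      have hbg := hsub g' hg'
      have hcard : g'.card = j := hg'.2
      have hmle : m ≤ j := by
        have := Finset.card_le_card hbg
        omega
      have : b = g' := Finset.eq_of_subset_of_card_le hbg (by omega)
      simp [← this]
    calc {g ∈ interFam ((fun h => h₀ ∪ h) '' H₁) s | g.card = j}.encard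
        ≤ ({b} : Set (Finset α)).encard := Set.encard_le_encard hsingle
      _ = 1 := Set.encard_singleton b
      _ ≤ ((j + 1) ^ (d₁ - 1) : ℕ) := by
          exact_mod_cast Nat.one_le_iff_ne_zero.mpr (pow_ne_zero _ (by omega))
end
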